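/- arXiv:2509.08692 — 2 statements merged into one kernel-verified Lean document; each statement's English description precedes it below -/
import Mathlib

section
/- For every ε > 0 there exists k₀ such that for all integers k ≥ k₀ there exists a linear k-graph with the strong Erdős–Szekeres property having at most (1+ε)·4k⁷(ln k)·C((k−1)²+1, k) vertices, where C(n, m) denotes the binomial coefficient; that is, n'_sES(k) ≤ (1+o(1))·4k⁷ ln k·C((k−1)²+1, k). -/
/-!
Take a prime `q ≥ N = (k-1)²+1` and the `q²` affine lines `{(a x + b, x) : x < N}` in
`𝔽_q × [N]`; two of them meet in at most one point. By Erdős–Szekeres, any two linear orders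
are monotonically consistent on some `k`-subset of each line. Pick one `k`-subset of every line
at random: a fixed pair of orders is inconsistent on all chosen edges with probability at most
`(1 - 1/C)^{q²} ≤ exp(-q²/C)`, `C = C(N, k)`, and there are at most `n^{2n}` pairs of orders on
the `n = qN` vertices. So some choice works as soon as `q > 2NC log n`; with `q` taken from
Bertrand's postulate just above this threshold, `n = qN = O(k⁵ log k · C)`.
-/

open scoped Classical

open Finset Function

section Concordance

variable {V β γ : Type*}

def IsConcordantOn [LT β] [LT γ] (σ : V → β) (τ : V → γ) (t : Finset V) : Prop :=
  ∀ x ∈ t, ∀ y ∈ t, σ x < σ y → τ x < τ y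

def IsDiscordantOn [LT β] [LT γ] (σ : V → β) (τ : V → γ) (t : Finset V) : Prop :=
  ∀ x ∈ t, ∀ y ∈ t, σ x < σ y → τ y < τ x

def MonotonicallyConsistentOn [LT β] [LT γ] (σ : V → β) (τ : V → γ) (t : Finset V) : Prop :=
  IsConcordantOn σ τ t ∨ IsDiscordantOn σ τ t

lemma MonotonicallyConsistentOn.mono [LT β] [LT γ] {σ : V → β} {τ : V → γ} {s t : Finset V}
    (h : MonotonicallyConsistentOn σ τ t) (hst : s ⊆ t) : MonotonicallyConsistentOn σ τ s :=
  h.imp (fun h x hx y hy => h x (hst hx) y (hst hy)) (fun h x hx y hy => h x (hst hx) y (hst hy))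

end Concordance

section Height

variable {V β γ : Type*} [Preorder β] [Preorder γ] (σ : V → β) (τ : V → γ) (s : Finset V)

noncomputable def concordantHeight (x : V) : ℕ :=
  {t ∈ s.powerset | IsConcordantOn σ τ t ∧ ∀ y ∈ t, σ y ≤ σ x ∧ τ y ≤ τ x}.sup card

variable {σ τ s}

lemma concordantHeight_pos {x : V} (hx : x ∈ s) : 0 < concordantHeight σ τ s x := by
  have hmem : {x} ∈ {t ∈ s.powerset | IsConcordantOn σ τ t ∧
      ∀ y ∈ t, σ y ≤ σ x ∧ τ y ≤ τ x} := by
    rw [mem_filter]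
    simp [hx, IsConcordantOn]
  exact Finset.le_sup (f := card) hmem

lemma concordantHeight_lt_concordantHeight {x y : V} (hy : y ∈ s) (hσ : σ x < σ y)
    (hτ : τ x < τ y) : concordantHeight σ τ s x < concordantHeight σ τ s y := by
  obtain ⟨t, ht, hmax⟩ := exists_mem_eq_sup
    {t ∈ s.powerset | IsConcordantOn σ τ t ∧ ∀ z ∈ t, σ z ≤ σ x ∧ τ z ≤ τ x}
    ⟨∅, by rw [mem_filter]; simp [IsConcordantOn]⟩ card
  rw [mem_filter, mem_powerset] at ht
  obtain ⟨hts, htc, htx⟩ := ht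
  have hyt : y ∉ t := fun hyt => (htx y hyt).1.not_gt hσ
  have hzy : ∀ z ∈ t, σ z < σ y ∧ τ z < τ y := fun z hz =>
    ⟨(htx z hz).1.trans_lt hσ, (htx z hz).2.trans_lt hτ⟩
  have hmem : insert y t ∈ {t ∈ s.powerset | IsConcordantOn σ τ t ∧
      ∀ z ∈ t, σ z ≤ σ y ∧ τ z ≤ τ y} := by
    rw [mem_filter, mem_powerset]
    simp only [insert_subset_iff, forall_mem_insert, le_refl, true_and]
    refine ⟨⟨hy, hts⟩, ?_, fun z hz => ⟨(hzy z hz).1.le, (hzy z hz).2.le⟩⟩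
    simp only [IsConcordantOn, forall_mem_insert, lt_irrefl, IsEmpty.forall_iff, true_and]
    exact ⟨fun z hz h => absurd h (hzy z hz).1.asymm,
      fun z hz => ⟨fun _ => (hzy z hz).2, htc z hz⟩⟩
  calc concordantHeight σ τ s x = #t := hmax
    _ < #(insert y t) := by rw [card_insert_of_notMem hyt]; omega
    _ ≤ concordantHeight σ τ s y := Finset.le_sup hmem

lemma concordantHeight_le {r : ℕ} (hr : ∀ t ⊆ s, IsConcordantOn σ τ t → #t ≤ r) (x : V) :
    concordantHeight σ τ s x ≤ r :=
  Finset.sup_le fun t ht => by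
    rw [mem_filter, mem_powerset] at ht
    exact hr t ht.1 ht.2.1

end Height

section ErdosSzekeres

variable {V β γ : Type*} [Preorder β] [LinearOrder γ] {σ : V → β} {τ : V → γ} {s : Finset V}

lemma isDiscordantOn_concordantHeight_fiber (hτ : Set.InjOn τ s) (m : ℕ) :
    IsDiscordantOn σ τ {x ∈ s | concordantHeight σ τ s x = m} := by
  intro x hx y hy hσ
  rw [mem_filter] at hx hy
  refine lt_of_le_of_ne (not_lt.1 fun hτ' => ?_) fun h => hσ.ne (congrArg σ (hτ hy.1 hx.1 h).symm)
  exact (concordantHeight_lt_concordantHeight hy.1 hσ hτ').ne (hx.2.trans hy.2.symm)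

theorem exists_concordant_or_discordant {r r' : ℕ}
    (hτ : Set.InjOn τ s) (hs : r * r' < #s) :
    (∃ t ⊆ s, r < #t ∧ IsConcordantOn σ τ t) ∨ ∃ t ⊆ s, r' < #t ∧ IsDiscordantOn σ τ t := by
  refine or_iff_not_imp_left.2 fun hr => ?_
  have hmaps : ∀ x ∈ s, concordantHeight σ τ s x ∈ Icc 1 r := fun x hx =>
    mem_Icc.2 ⟨concordantHeight_pos hx,
      concordantHeight_le (fun t hts ht => not_lt.1 fun hlt => hr ⟨t, hts, hlt, ht⟩) x⟩
  obtain ⟨m, -, hm⟩ := exists_lt_card_fiber_of_mul_lt_card_of_maps_to hmaps (by simpa using hs)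
  exact ⟨_, filter_subset _ _, hm, isDiscordantOn_concordantHeight_fiber hτ m⟩

theorem exists_card_eq_monotonicallyConsistentOn {k : ℕ} (hτ : Set.InjOn τ s)
    (hs : (k - 1) ^ 2 < #s) :
    ∃ t ⊆ s, #t = k ∧ MonotonicallyConsistentOn σ τ t := by
  rw [sq] at hs
  obtain ⟨t, hts, hkt, ht⟩ | ⟨t, hts, hkt, ht⟩ := exists_concordant_or_discordant (σ := σ) hτ hs
  all_goals
    obtain ⟨u, hut, rfl⟩ := exists_subset_card_eq (show k ≤ #t by omega)
    refine ⟨u, hut.trans hts, rfl, MonotonicallyConsistentOn.mono ?_ hut⟩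
  exacts [.inl ht, .inr ht]

end ErdosSzekeres

section Hypergraph

variable {V : Type*}

def IsUniform (k : ℕ) (E : Finset (Finset V)) : Prop := ∀ e ∈ E, #e = k

def IsLinear [DecidableEq V] (E : Finset (Finset V)) : Prop :=
  ∀ e ∈ E, ∀ f ∈ E, e ≠ f → #(e ∩ f) ≤ 1

def HasStrongErdosSzekeres (β : Type*) [LT β] (E : Finset (Finset V)) : Prop :=
  ∀ σ τ : V → β, Injective σ → Injective τ → ∃ e ∈ E, MonotonicallyConsistentOn σ τ e

lemma exists_fin_lt_iff_lt [Fintype V] {β : Type*} [LinearOrder β] {σ : V → β}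
    (hσ : Injective σ) : ∃ f : V → Fin (Fintype.card V), ∀ x y, f x < f y ↔ σ x < σ y := by
  let e := (univ.image σ).orderIsoOfFin (card_image_of_injective univ hσ)
  exact ⟨fun x => e.symm ⟨σ x, mem_image_of_mem σ (mem_univ x)⟩,
    fun x y => e.symm.lt_iff_lt.trans Subtype.mk_lt_mk⟩

lemma HasStrongErdosSzekeres.of_fin [Fintype V] {E : Finset (Finset V)} (β : Type*) [LinearOrder β]
    (h : HasStrongErdosSzekeres (Fin (Fintype.card V)) E) : HasStrongErdosSzekeres β E := by
  intro σ τ hσ hτ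
  obtain ⟨f, hf⟩ := exists_fin_lt_iff_lt hσ
  obtain ⟨g, hg⟩ := exists_fin_lt_iff_lt hτ
  have hinj : ∀ {u : V → Fin (Fintype.card V)} {v : V → β}, (∀ x y, u x < u y ↔ v x < v y) →
      Injective v → Injective u := fun huv hv x y hxy =>
    hv (le_antisymm (not_lt.1 fun h => ((huv y x).2 h).ne' hxy)
      (not_lt.1 fun h => ((huv x y).2 h).ne hxy))
  obtain ⟨e, he, hfg⟩ := h f g (hinj hf hσ) (hinj hg hτ)
  refine ⟨e, he, ?_⟩
  simpa only [MonotonicallyConsistentOn, IsConcordantOn, IsDiscordantOn, hf, hg] using hfg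

end Hypergraph

-- The union bound for a uniformly random choice of one element of each `K i`, in counting form.
theorem exists_forall_mem_forall_exists_of_card_mul_lt {ι α P : Type*} [Fintype ι]
    (K : ι → Finset α) {c : ℕ} (hK : ∀ i, #(K i) = c) (T : Finset P)
    (good : P → ι → α → Prop) (hgood : ∀ p ∈ T, ∀ i, ∃ a ∈ K i, good p i a)
    (hT : #T * (c - 1) ^ Fintype.card ι < c ^ Fintype.card ι) :
    ∃ ω : ι → α, (∀ i, ω i ∈ K i) ∧ ∀ p ∈ T, ∃ i, good p i (ω i) := by
  let bad : P → Finset (ι → α) := fun p => Fintype.piFinset fun i => {a ∈ K i | ¬ good p i a}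
  have hbad : ∀ p ∈ T, #(bad p) ≤ (c - 1) ^ Fintype.card ι := fun p hp => by
    rw [Fintype.card_piFinset, ← card_univ]
    refine prod_le_pow_card _ _ _ fun i _ => ?_
    obtain ⟨a, ha, hpa⟩ := hgood p hp i
    have : #{a ∈ K i | ¬ good p i a} < #(K i) :=
      card_lt_card (filter_ssubset.2 ⟨a, ha, not_not.2 hpa⟩)
    rw [hK] at this
    omega
  have hlt : #(T.biUnion bad) < #(Fintype.piFinset K) := calc
    #(T.biUnion bad) ≤ ∑ p ∈ T, #(bad p) := card_biUnion_le
    _ ≤ #T * (c - 1) ^ Fintype.card ι := by simpa using sum_le_sum hbad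
    _ < #(Fintype.piFinset K) := by simpa [hK] using hT
  obtain ⟨ω, hω, hωbad⟩ := exists_mem_notMem_of_card_lt_card hlt
  refine ⟨ω, Fintype.mem_piFinset.1 hω, fun p hp => ?_⟩
  have : ω ∉ bad p := fun h => hωbad (mem_biUnion.2 ⟨p, hp, h⟩)
  simp only [bad, Fintype.mem_piFinset, not_forall] at this
  obtain ⟨i, hi⟩ := this
  rw [mem_filter, not_and, not_not] at hi
  exact ⟨i, hi (Fintype.mem_piFinset.1 hω i)⟩

theorem exists_isUniform_isLinear_hasStrongErdosSzekeres_of_lines {V ι : Type*} [Fintype V]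
    [DecidableEq V] [Fintype ι] (ℓ : ι → Finset V) {k N : ℕ} (hℓ : ∀ i, #(ℓ i) = N)
    (hℓℓ : Pairwise fun i j => #(ℓ i ∩ ℓ j) ≤ 1) (hN : (k - 1) ^ 2 < N)
    (hcount : Fintype.card V ^ (2 * Fintype.card V) * (N.choose k - 1) ^ Fintype.card ι <
      N.choose k ^ Fintype.card ι) :
    ∃ E : Finset (Finset V), IsUniform k E ∧ IsLinear E ∧ HasStrongErdosSzekeres ℕ E := by
  set n := Fintype.card V
  let T : Finset ((V → Fin n) × (V → Fin n)) := {p | Injective p.1 ∧ Injective p.2}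
  have hT : #T ≤ n ^ (2 * n) :=
    (card_filter_le _ _).trans_eq (by simp [n, two_mul, pow_add])
  obtain ⟨ω, hωℓ, hω⟩ := exists_forall_mem_forall_exists_of_card_mul_lt
    (fun i => (ℓ i).powersetCard k) (by simp [hℓ]) T
    (fun p _ e => MonotonicallyConsistentOn p.1 p.2 e)
    (fun p hp i => by
      rw [mem_filter] at hp
      obtain ⟨t, hts, htk, ht⟩ :=
        exists_card_eq_monotonicallyConsistentOn (σ := p.1) (s := ℓ i) hp.2.2.injOn (by rwa [hℓ])
      exact ⟨t, mem_powersetCard.2 ⟨hts, htk⟩, ht⟩)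
    ((Nat.mul_le_mul_right _ hT).trans_lt hcount)
  simp only [mem_powersetCard] at hωℓ
  refine ⟨univ.image ω, ?_, ?_, HasStrongErdosSzekeres.of_fin ℕ fun σ τ hσ hτ => ?_⟩
  · simp only [IsUniform, mem_image, mem_univ, true_and, forall_exists_index,
      forall_apply_eq_imp_iff]
    exact fun i => (hωℓ i).2
  · simp only [IsLinear, mem_image, mem_univ, true_and, forall_exists_index,
      forall_apply_eq_imp_iff]
    intro i j hij
    have hij : i ≠ j := fun h => hij (h ▸ rfl)
    exact (card_le_card (inter_subset_inter (hωℓ i).1 (hωℓ j).1)).trans (hℓℓ hij)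
  · obtain ⟨i, hi⟩ := hω (σ, τ) (mem_filter.2 ⟨mem_univ _, hσ, hτ⟩)
    exact ⟨ω i, mem_image_of_mem ω (mem_univ i), hi⟩

lemma eq_and_eq_of_mul_add_eq_mul_add {R : Type*} [CommRing R] [NoZeroDivisors R]
    {a b a' b' u v : R} (huv : u ≠ v) (hu : a * u + b = a' * u + b')
    (hv : a * v + b = a' * v + b') : a = a' ∧ b = b' := by
  have ha : a = a' := by
    have : (a - a') * (u - v) = 0 := by linear_combination hu - hv
    simpa [sub_eq_zero, huv] using this
  subst ha
  simpa using hu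

section AffineLines

variable {R X : Type*} [CommRing R] [DecidableEq R] [Fintype X] [DecidableEq X]

noncomputable def affineLine (χ : X → R) (p : R × R) : Finset (R × X) :=
  univ.image fun x => (p.1 * χ x + p.2, x)

lemma card_affineLine (χ : X → R) (p : R × R) : #(affineLine χ p) = Fintype.card X :=
  card_image_of_injective _ fun _ _ h => congrArg Prod.snd h

lemma card_affineLine_inter_le_one [NoZeroDivisors R] {χ : X → R} (hχ : Injective χ)
    {p p' : R × R} (hp : p ≠ p') :
    #(affineLine χ p ∩ affineLine χ p') ≤ 1 := by
  simp only [card_le_one, affineLine, mem_inter, mem_image, mem_univ, true_and, and_imp,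
    forall_exists_index]
  rintro _ x rfl y hxy _ u rfl v huv
  simp only [Prod.mk.injEq] at hxy huv
  obtain ⟨hxy, rfl⟩ := hxy
  obtain ⟨huv, rfl⟩ := huv
  obtain rfl | hyv := eq_or_ne y v
  · rfl
  obtain ⟨h₁, h₂⟩ := eq_and_eq_of_mul_add_eq_mul_add (hχ.ne hyv) hxy huv
  exact (hp (Prod.ext h₁ h₂).symm).elim

end AffineLines

theorem exists_isUniform_isLinear_hasStrongErdosSzekeres_of_prime {k N q : ℕ} (hq : q.Prime)
    (hNq : N ≤ q) (hN : (k - 1) ^ 2 < N)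
    (hcount : (q * N) ^ (2 * (q * N)) * (N.choose k - 1) ^ (q * q) < N.choose k ^ (q * q)) :
    ∃ E : Finset (Finset (Fin (q * N))), IsUniform k E ∧ IsLinear E ∧
      HasStrongErdosSzekeres ℕ E := by
  have := Fact.mk hq
  let χ : Fin N → ZMod q := fun x => (x : ℕ)
  have hχ : Injective χ := fun x y h => Fin.ext <| by
    simpa [χ, ZMod.val_natCast_of_lt (x.2.trans_le hNq), ZMod.val_natCast_of_lt (y.2.trans_le hNq)]
      using congrArg ZMod.val h
  let ι : ZMod q × Fin N ≃ Fin (q * N) := Fintype.equivFinOfCardEq (by simp [ZMod.card])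
  refine exists_isUniform_isLinear_hasStrongErdosSzekeres_of_lines
    (fun p => (affineLine χ p).map ι.toEmbedding) (N := N) (fun p => by simp [card_affineLine])
    (fun p p' hp => ?_) hN (by simpa [ZMod.card] using hcount)
  show #(_ ∩ _) ≤ 1
  rw [← map_inter, card_map]
  exact card_affineLine_inter_le_one hχ hp

theorem exists_prime_lt_le_two_mul_add_two {x : ℝ} (hx : 0 < x) :
    ∃ p : ℕ, p.Prime ∧ x < p ∧ (p : ℝ) ≤ 2 * x + 2 := by
  obtain ⟨p, hp, hlt, hle⟩ := Nat.exists_prime_lt_and_le_two_mul ⌈x⌉₊ (Nat.ceil_pos.2 hx).ne'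
  have hceil := Nat.ceil_lt_add_one hx.le
  have hle : (p : ℝ) ≤ 2 * ⌈x⌉₊ := by exact_mod_cast hle
  exact ⟨p, hp, (Nat.le_ceil x).trans_lt (by exact_mod_cast hlt), by linarith⟩

theorem mul_sub_one_pow_lt_pow {A c T : ℕ} (hc : 0 < c) (h : c * Real.log A < T) :
    A * (c - 1) ^ T < c ^ T := by
  rcases A.eq_zero_or_pos with rfl | hA
  · simpa using pow_pos hc T
  have hcR : (0 : ℝ) < c := by exact_mod_cast hc
  have hAR : (0 : ℝ) < A := by exact_mod_cast hA
  have hsub : ((c : ℝ) - 1) ^ T ≤ c ^ T * Real.exp (-(T / c)) := calc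
    ((c : ℝ) - 1) ^ T = c ^ T * (1 - 1 / c) ^ T := by rw [← mul_pow]; field_simp
    _ ≤ c ^ T * Real.exp (-(1 / c)) ^ T := by
      gcongr
      · rw [sub_nonneg, div_le_one hcR]; exact_mod_cast hc
      · exact Real.one_sub_le_exp_neg _
    _ = c ^ T * Real.exp (-(T / c)) := by rw [← Real.exp_nat_mul]; ring_nf
  have hexp : (A : ℝ) * Real.exp (-(T / c)) < 1 := by
    rw [← Real.exp_log hAR, ← Real.exp_add, Real.exp_lt_one_iff, add_neg_lt_iff_lt_add, zero_add,
      lt_div_iff₀ hcR]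
    linarith
  have key : (A : ℝ) * ((c : ℝ) - 1) ^ T < c ^ T := calc
    (A : ℝ) * ((c : ℝ) - 1) ^ T ≤ A * (c ^ T * Real.exp (-(T / c))) := by gcongr
    _ = c ^ T * (A * Real.exp (-(T / c))) := by ring
    _ < c ^ T := mul_lt_of_lt_one_right (by positivity) hexp
  rw [← Nat.cast_pred hc] at key
  exact_mod_cast key

lemma one_add_mul_pow_seven_mul_log_mul_le_pow {ε c : ℝ} {k : ℕ} (hε : 0 ≤ ε) (hk : 10 ≤ k)
    (hkε : 1 + ε ≤ k) (hc₀ : 0 ≤ c) (hc : c ≤ k ^ (2 * k)) :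
    (1 + ε) * 4 * (k : ℝ) ^ 7 * Real.log k * c ≤ k ^ (3 * k) := by
  have hk10 : (10 : ℝ) ≤ k := by exact_mod_cast hk
  have := add_nonneg zero_le_one hε
  calc (1 + ε) * 4 * (k : ℝ) ^ 7 * Real.log k * c ≤ (k : ℝ) * k * k ^ 7 * k * k ^ (2 * k) := by
        gcongr
        · linarith
        · exact Real.log_le_self (by positivity)
      _ = (k : ℝ) ^ (2 * k + 10) := by ring
      _ ≤ k ^ (3 * k) := pow_le_pow_right₀ (by linarith) (by omega)

lemma two_mul_add_two_mul_le {N : ℕ} {c : ℝ} {k : ℕ} (hk : 11 ≤ k) (hNk : N ≤ k ^ 2)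
    (hc : 1 ≤ c) :
    (2 * (2 * N * c * (3 * k * Real.log k)) + 2) * N ≤ 4 * (k : ℝ) ^ 7 * Real.log k * c := by
  have hk11 : (11 : ℝ) ≤ k := by exact_mod_cast hk
  have hlog : 1 ≤ Real.log k := by
    rw [Real.le_log_iff_exp_le (by positivity)]
    linarith [Real.exp_one_lt_d9]
  have hNR : (N : ℝ) ≤ k ^ 2 := by exact_mod_cast hNk
  have hk2 : (k : ℝ) ^ 2 ≤ k ^ 5 * Real.log k * c := calc
    (k : ℝ) ^ 2 ≤ k ^ 5 * 1 * 1 := by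
      rw [mul_one, mul_one]; exact pow_le_pow_right₀ (by linarith) (by norm_num)
    _ ≤ k ^ 5 * Real.log k * c := by gcongr
  calc (2 * (2 * N * c * (3 * k * Real.log k)) + 2) * N
      = 12 * (k * Real.log k * c) * N ^ 2 + 2 * N := by ring
    _ ≤ 12 * (k * Real.log k * c) * (k ^ 2) ^ 2 + 2 * k ^ 2 := by gcongr
    _ ≤ 14 * (k ^ 5 * Real.log k * c) := by linarith
    _ ≤ 4 * k ^ 2 * (k ^ 5 * Real.log k * c) := by gcongr; nlinarith
    _ = 4 * (k : ℝ) ^ 7 * Real.log k * c := by ring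

theorem exists_prime_mul_le_and_count_lt {ε : ℝ} (hε : 0 ≤ ε) {k N : ℕ} (hk : 11 ≤ k)
    (hkε : 1 + ε ≤ k) (hkN : k ≤ N) (hNk : N ≤ k ^ 2) :
    ∃ q : ℕ, q.Prime ∧ N ≤ q ∧
      ((q * N : ℕ) : ℝ) ≤ (1 + ε) * 4 * (k : ℝ) ^ 7 * Real.log k * (N.choose k : ℝ) ∧
      (q * N) ^ (2 * (q * N)) * (N.choose k - 1) ^ (q * q) < N.choose k ^ (q * q) := by
  set C := N.choose k
  have hC : 1 ≤ C := Nat.choose_pos hkN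
  have hCR : (1 : ℝ) ≤ C := by exact_mod_cast hC
  have hCk : (C : ℝ) ≤ k ^ (2 * k) := by
    have : C ≤ k ^ (2 * k) :=
      (Nat.choose_le_pow N k).trans (by rw [pow_mul]; exact Nat.pow_le_pow_left hNk k)
    exact_mod_cast this
  have hk11 : (11 : ℝ) ≤ k := by exact_mod_cast hk
  have hN1 : (1 : ℝ) ≤ N := by exact_mod_cast (by omega : 1 ≤ N)
  -- `L = log (k ^ (3 * k))` is an a priori bound for `log (q * N)`.
  set L := 3 * k * Real.log k
  have hL : 1 ≤ L := by
    have : 1 ≤ Real.log k := by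
      rw [Real.le_log_iff_exp_le (by positivity)]
      linarith [Real.exp_one_lt_d9]
    nlinarith
  obtain ⟨q, hq, hXq, hqX⟩ := exists_prime_lt_le_two_mul_add_two (x := 2 * N * C * L)
    (by positivity)
  have hq0 : (0 : ℝ) < q := by exact_mod_cast hq.pos
  have hNq : (N : ℝ) < q := by nlinarith [mul_le_mul hCR hL zero_le_one (by positivity)]
  have hn : (q : ℝ) * N ≤ (1 + ε) * 4 * (k : ℝ) ^ 7 * Real.log k * C := calc
    (q : ℝ) * N ≤ (2 * (2 * N * C * L) + 2) * N := by gcongr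
    _ ≤ 4 * (k : ℝ) ^ 7 * Real.log k * C := two_mul_add_two_mul_le hk hNk hCR
    _ ≤ (1 + ε) * (4 * (k : ℝ) ^ 7 * Real.log k * C) :=
      le_mul_of_one_le_left (by positivity) (by linarith)
    _ = (1 + ε) * 4 * (k : ℝ) ^ 7 * Real.log k * C := by ring
  have hlogn : Real.log (q * N) ≤ L := calc
    Real.log (q * N) ≤ Real.log (k ^ (3 * k)) := Real.log_le_log (by positivity)
      (hn.trans (one_add_mul_pow_seven_mul_log_mul_le_pow hε (by omega) hkε (by positivity) hCk))
    _ = L := by rw [Real.log_pow]; push_cast; ring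
  refine ⟨q, hq, by exact_mod_cast hNq.le, by push_cast; exact hn, mul_sub_one_pow_lt_pow hC ?_⟩
  push_cast
  rw [Real.log_pow]
  push_cast
  calc C * (2 * (q * N) * Real.log (q * N)) ≤ C * (2 * (q * N) * L) := by gcongr
    _ = q * (2 * N * C * L) := by ring
    _ < q * q := by gcongr

/-- For every `ε > 0` there exists `k₀` such that for all `k ≥ k₀`
there exists a linear `k`-graph with the strong Erdős–Szekeres property having at most
`(1+ε)·4k⁷(ln k)·C((k−1)²+1, k)` vertices; that is,
`n'_sES(k) ≤ (1+o(1))·4k⁷ ln k·C((k−1)²+1, k)`. -/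
theorem stmt_9 :
    ∀ ε : ℝ, 0 < ε → ∃ k₀ : ℕ, ∀ k : ℕ, k₀ ≤ k →
      ∃ (n : ℕ) (E : Finset (Finset (Fin n))),
        (∀ e ∈ E, e.card = k) ∧
        (∀ e ∈ E, ∀ f ∈ E, e ≠ f → (e ∩ f).card ≤ 1) ∧
        (∀ σ τ : Fin n → ℕ, Function.Injective σ → Function.Injective τ →
          ∃ e ∈ E, (∀ x ∈ e, ∀ y ∈ e, σ x < σ y → τ x < τ y) ∨
                   (∀ x ∈ e, ∀ y ∈ e, σ x < σ y → τ y < τ x)) ∧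
        (n : ℝ) ≤ (1 + ε) * 4 * (k : ℝ) ^ 7 * Real.log k *
          (Nat.choose ((k - 1) ^ 2 + 1) k : ℝ) := by
  intro ε hε
  refine ⟨max 11 ⌈1 + ε⌉₊, fun k hk => ?_⟩
  have hkε : 1 + ε ≤ k := Nat.ceil_le.1 (le_of_max_le_right hk)
  have hk11 : 11 ≤ k := le_of_max_le_left hk
  have hkN : k ≤ (k - 1) ^ 2 + 1 := by have := Nat.le_self_pow two_ne_zero (k - 1); omega
  have hNk : (k - 1) ^ 2 + 1 ≤ k ^ 2 := Nat.pow_lt_pow_left (by omega) two_ne_zero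
  obtain ⟨q, hq, hNq, hn, hcount⟩ :=
    exists_prime_mul_le_and_count_lt hε.le hk11 hkε hkN hNk
  obtain ⟨E, hunif, hlin, hES⟩ :=
    exists_isUniform_isLinear_hasStrongErdosSzekeres_of_prime hq hNq (Nat.lt_succ_self _) hcount
  exact ⟨_, E, hunif, hlin, hES, hn⟩
end

section
/- For every integer k ≥ 3, every oriented k-graph with Property O has at least k! + 1 edges; that is, f(k) ≥ k! + 1. -/
/-!
Suppose `#E ≤ k!`. Every edge is consistent with exactly a `1/k!` fraction of the orders of `V`,
so double counting the pairs (order, consistent edge) shows that every order is consistent with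
exactly one edge. Now fix an edge `e₀` and consider the `k!` orders which list the vertices of
`e₀` first, in any order `τ`, and the remaining vertices after them in a fixed order. Counting the
pairs (`τ`, consistent edge) gives `k!` again. The edge `e₀` is consistent only with `τ = 1`.
Another edge `e` shares `j < k` vertices with `e₀`, and if it is consistent with some `τ` at all,
it is consistent exactly with the `k!/j!` permutations `τ` ordering these shared vertices as `e`
does; `k!/j!` is a multiple of `k`. Hence `k ∣ k! - 1`, which is absurd for `k ≥ 2`.
-/

open Function Finset Equiv Nat

open scoped Classical

theorem Tuple.eq_sort_iff_strictMono {α : Type*} [LinearOrder α] {n : ℕ} {f : Fin n → α}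
    (hf : Injective f) {σ : Perm (Fin n)} : σ = Tuple.sort f ↔ StrictMono (f ∘ σ) := by
  rw [Tuple.eq_sort_iff]
  exact ⟨fun h => h.1.strictMono_of_injective (hf.comp σ.injective),
    fun h => ⟨h.monotone, fun i j hij hfij => absurd (σ.injective (hf hfij)) hij.ne⟩⟩

theorem card_filter_strictMono_comp_mul_factorial_fin {X Y : Type*} [Fintype X] [Fintype Y]
    [LinearOrder Y] (hXY : Fintype.card X = Fintype.card Y) {j : ℕ} {a : Fin j → X}
    (ha : Injective a) : #{π : X ≃ Y | StrictMono (π ∘ a)} * j ! = (Fintype.card X)! := by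
  let ρ : Perm (Fin j) → Perm X := fun τ => τ.extendDomain (ofInjective a ha)
  have hρ : ∀ τ i, ρ τ (a i) = a (τ i) := fun τ i => by
    simpa using Perm.extendDomain_apply_image τ (ofInjective a ha) i
  have hsort : ∀ (π : X ≃ Y) τ, Tuple.sort (π ∘ a) = τ ↔ StrictMono (π ∘ a ∘ τ) := fun π τ => by
    rw [eq_comm, Tuple.eq_sort_iff_strictMono (π.injective.comp ha), comp_assoc]
  -- precomposing with `ρ τ` identifies the orders sorted by `τ` with the orders sorted by `1`
  have hfiber : ∀ τ : Perm (Fin j),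
      #{π : X ≃ Y | Tuple.sort (π ∘ a) = τ} = #{π : X ≃ Y | StrictMono (π ∘ a)} := by
    intro τ
    have hρ' : ∀ i, (ρ τ).symm (a (τ i)) = a i := fun i => by rw [← hρ, symm_apply_apply]
    refine card_nbij' (fun π => (ρ τ).trans π) (fun π => (ρ τ).symm.trans π) ?_ ?_ ?_ ?_
    · intro π
      simp only [coe_filter, mem_univ, true_and, Set.mem_ofPred_eq, hsort]
      simp [comp_def, hρ]
    · intro π
      simp only [coe_filter, mem_univ, true_and, Set.mem_ofPred_eq, hsort]
      simp [comp_def, hρ']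
    · intro π _; ext; simp
    · intro π _; ext; simp
  calc #{π : X ≃ Y | StrictMono (π ∘ a)} * j !
      = ∑ τ : Perm (Fin j), #{π : X ≃ Y | Tuple.sort (π ∘ a) = τ} := by
        simp [hfiber, Fintype.card_perm, mul_comm]
    _ = Fintype.card (X ≃ Y) := (card_eq_sum_card_fiberwise (by simp)).symm
    _ = (Fintype.card X)! := Fintype.card_equiv (Fintype.equivOfCardEq hXY)

theorem card_filter_strictMono_comp_mul_factorial {κ X Y : Type*} [Fintype κ] [LinearOrder κ]
    [Fintype X] [Fintype Y] [LinearOrder Y] (hXY : Fintype.card X = Fintype.card Y)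
    {a : κ → X} (ha : Injective a) :
    #{π : X ≃ Y | StrictMono (π ∘ a)} * (Fintype.card κ)! = (Fintype.card X)! := by
  let ψ := Fintype.orderIsoFinOfCardEq κ rfl
  have hψ : ∀ π : X ≃ Y, StrictMono (π ∘ a ∘ ψ) ↔ StrictMono (π ∘ a) := fun π =>
    ⟨fun h => by simpa [comp_def] using h.comp ψ.symm.strictMono, fun h => h.comp ψ.strictMono⟩
  simp_rw [← hψ]
  exact card_filter_strictMono_comp_mul_factorial_fin hXY (ha.comp ψ.injective)

theorem card_filter_strictMono_equiv_comp_eq_one {k : ℕ} {V Y : Type*} [Fintype V] [Fintype Y]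
    [LinearOrder Y] (hVY : Fintype.card V = Fintype.card Y) {E : Finset (Fin k → V)}
    (hinj : ∀ e ∈ E, Injective e) (hE : #E ≤ k !)
    (hcover : ∀ π : V ≃ Y, ∃ e ∈ E, StrictMono (π ∘ e)) (π : V ≃ Y) :
    #{e ∈ E | StrictMono (π ∘ e)} = 1 := by
  have hpos : ∀ π : V ≃ Y, 1 ≤ #{e ∈ E | StrictMono (π ∘ e)} := fun π => by
    obtain ⟨e, he, hmono⟩ := hcover π
    exact card_pos.2 ⟨e, mem_filter.2 ⟨he, hmono⟩⟩
  have hdouble : (∑ π : V ≃ Y, #{e ∈ E | StrictMono (π ∘ e)}) * k ! = #E * (Fintype.card V)! := by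
    calc (∑ π : V ≃ Y, #{e ∈ E | StrictMono (π ∘ e)}) * k !
        = (∑ e ∈ E, #{π : V ≃ Y | StrictMono (π ∘ e)}) * k ! :=
          congrArg (· * k !) (sum_card_bipartiteAbove_eq_sum_card_bipartiteBelow
            (fun (e : Fin k → V) (π : V ≃ Y) => StrictMono (π ∘ e))).symm
      _ = #E * (Fintype.card V)! := by
        rw [sum_mul, sum_congr rfl fun e he =>
          card_filter_strictMono_comp_mul_factorial_fin hVY (hinj e he), sum_const, smul_eq_mul]
  have hle : ∑ π : V ≃ Y, #{e ∈ E | StrictMono (π ∘ e)} ≤ ∑ _π : V ≃ Y, 1 := by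
    have : (∑ π : V ≃ Y, #{e ∈ E | StrictMono (π ∘ e)}) * k ! ≤ (∑ _π : V ≃ Y, 1) * k ! := by
      rw [hdouble, sum_const, Finset.card_univ, Fintype.card_equiv (Fintype.equivOfCardEq hVY),
        smul_eq_mul, mul_one, mul_comm]
      exact Nat.mul_le_mul_left _ hE
    exact Nat.le_of_mul_le_mul_right this (factorial_pos k)
  exact ((sum_eq_sum_iff_of_le fun π _ => hpos π).1
    (le_antisymm (sum_le_sum fun π _ => hpos π) hle) π (mem_univ π)).symm

theorem exists_equiv_fin_lt_iff {V α : Type*} [Fintype V] [LinearOrder α] {σ : V → α}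
    (hσ : Injective σ) : ∃ π : V ≃ Fin (Fintype.card V), ∀ u v, π u < π v ↔ σ u < σ v := by
  let : LinearOrder V := LinearOrder.lift' σ hσ
  exact ⟨(Fintype.orderIsoFinOfCardEq V rfl).symm.toEquiv,
    fun u v => (Fintype.orderIsoFinOfCardEq V rfl).symm.lt_iff_lt⟩

theorem card_filter_strictMono_comp_eq_one {k : ℕ} {V : Type*} [Fintype V]
    {E : Finset (Fin k → V)} (hinj : ∀ e ∈ E, Injective e) (hE : #E ≤ k !)
    (hO : ∀ σ : V → ℕ, Injective σ → ∃ e ∈ E, StrictMono (σ ∘ e)) {σ : V → ℕ}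
    (hσ : Injective σ) : #{e ∈ E | StrictMono (σ ∘ e)} = 1 := by
  obtain ⟨π, hπ⟩ := exists_equiv_fin_lt_iff hσ
  have hiff : ∀ e : Fin k → V, StrictMono (π ∘ e) ↔ StrictMono (σ ∘ e) := fun e => by
    simp only [StrictMono, comp_apply, hπ]
  simp_rw [← hiff]
  refine card_filter_strictMono_equiv_comp_eq_one (Fintype.card_fin _).symm hinj hE
    (fun π => ?_) π
  exact hO (fun v => π v) (Fin.val_injective.comp π.injective)

theorem Nat.dvd_of_mul_factorial_eq_factorial {c j k : ℕ} (h : c * j ! = k !) (hjk : j < k) :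
    k ∣ c := by
  obtain ⟨q, hq⟩ := Nat.factorial_dvd_factorial (Nat.le_sub_one_of_lt hjk)
  refine ⟨q, Nat.eq_of_mul_eq_mul_right j.factorial_pos ?_⟩
  rw [h, ← Nat.mul_factorial_pred (by omega), hq]
  ring

theorem strictMono_iff_strictMonoOn_of_eqOn_compl {ι β : Type*} [Preorder ι] [LinearOrder β]
    {f g : ι → β} {s : Set ι} {c : β} (hg : StrictMono g) (hfg : ∀ i ∉ s, f i = g i)
    (hf_lt : ∀ i ∈ s, f i < c) (hg_lt : ∀ i ∈ s, g i < c) (hf_ge : ∀ i ∉ s, c ≤ f i) :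
    StrictMono f ↔ StrictMonoOn f s := by
  refine ⟨fun h => h.strictMonoOn s, fun h i i' hii' => ?_⟩
  by_cases hi : i ∈ s <;> by_cases hi' : i' ∈ s
  · exact h hi hi' hii'
  · exact (hf_lt i hi).trans_le (hf_ge i' hi')
  · have := hg hii'
    rw [← hfg i hi] at this
    exact absurd ((hf_ge i hi).trans_lt (this.trans (hg_lt i' hi'))) (lt_irrefl c)
  · rw [hfg i hi, hfg i' hi']
    exact hg hii'

theorem Function.Injective.range_eq_of_range_subset {α β : Type*} [Finite α] {f g : α → β}
    (hf : Injective f) (hg : Injective g) (h : Set.range f ⊆ Set.range g) :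
    Set.range f = Set.range g :=
  Set.eq_of_subset_of_ncard_le h
    (by rw [Set.ncard_range_of_injective hf, Set.ncard_range_of_injective hg])

section OrderFirst

variable {V : Type*} {k : ℕ} {e₀ : Fin k → V} {r : V → ℕ}

variable (e₀ r) in
/-- The order on `V` putting the vertices of `e₀` first, ordered by `τ`, and then the others,
ordered by `r`. -/
noncomputable def orderFirst (τ : Perm (Fin k)) : V → ℕ :=
  extend e₀ (fun i => τ i) (fun v => k + r v)

theorem orderFirst_apply_self (he₀ : Injective e₀) (τ : Perm (Fin k)) (i : Fin k) :
    orderFirst e₀ r τ (e₀ i) = τ i :=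
  he₀.extend_apply _ _ i

theorem orderFirst_apply_of_notMem {v : V} (hv : v ∉ Set.range e₀) (τ : Perm (Fin k)) :
    orderFirst e₀ r τ v = k + r v :=
  extend_apply' _ _ _ hv

theorem orderFirst_lt_iff (he₀ : Injective e₀) (τ : Perm (Fin k)) (v : V) :
    orderFirst e₀ r τ v < k ↔ v ∈ Set.range e₀ := by
  by_cases hv : v ∈ Set.range e₀
  · obtain ⟨i, rfl⟩ := hv
    simp [orderFirst_apply_self he₀]
  · simp [orderFirst_apply_of_notMem hv, hv]

theorem injective_orderFirst (he₀ : Injective e₀) (hr : Injective r) (τ : Perm (Fin k)) :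
    Injective (orderFirst e₀ r τ) := by
  intro u v huv
  by_cases hu : u ∈ Set.range e₀ <;> by_cases hv : v ∈ Set.range e₀
  · obtain ⟨i, rfl⟩ := hu
    obtain ⟨i', rfl⟩ := hv
    simp only [orderFirst_apply_self he₀, Fin.val_inj, EmbeddingLike.apply_eq_iff_eq] at huv
    rw [huv]
  · exact absurd ((orderFirst_lt_iff he₀ τ v).1 (huv ▸ (orderFirst_lt_iff he₀ τ u).2 hu)) hv
  · exact absurd ((orderFirst_lt_iff he₀ τ u).1 (huv ▸ (orderFirst_lt_iff he₀ τ v).2 hv)) hu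
  · rw [orderFirst_apply_of_notMem hu, orderFirst_apply_of_notMem hv] at huv
    exact hr (by omega)

theorem strictMono_orderFirst_comp_self_iff (he₀ : Injective e₀) (τ : Perm (Fin k)) :
    StrictMono (orderFirst e₀ r τ ∘ e₀) ↔ τ = 1 := by
  have : orderFirst e₀ r τ ∘ e₀ = fun i => (τ i : ℕ) := funext (orderFirst_apply_self he₀ τ)
  rw [this, ← Perm.monotone_iff]
  exact ⟨fun h => h.monotone, fun h => h.strictMono_of_injective τ.injective⟩

theorem dvd_card_filter_strictMono_orderFirst_comp (he₀ : Injective e₀) {l : ℕ} {e : Fin l → V}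
    (he : Injective e) (hsub : ¬ Set.range e₀ ⊆ Set.range e) :
    k ∣ #{τ : Perm (Fin k) | StrictMono (orderFirst e₀ r τ ∘ e)} := by
  let s : Set (Fin l) := {i | e i ∈ Set.range e₀}
  have hs : ∀ p : s, ∃ i, e₀ i = e p := fun p => p.2
  choose a ha using hs
  have ha_inj : Injective a := fun p p' h => Subtype.ext (he (by rw [← ha, ← ha, h]))
  have hcard : Fintype.card s < k := by
    refine ((Fintype.card_le_of_injective a ha_inj).trans_eq (Fintype.card_fin k)).lt_of_ne
      fun hsk => hsub ?_
    have ha_surj : Surjective a :=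
      ((Fintype.bijective_iff_injective_and_card a).2 ⟨ha_inj, by simp [hsk]⟩).2
    rintro _ ⟨i, rfl⟩
    obtain ⟨p, rfl⟩ := ha_surj i
    exact ⟨p, (ha p).symm⟩
  rcases (filter (fun τ : Perm (Fin k) => StrictMono (orderFirst e₀ r τ ∘ e))
    univ).eq_empty_or_nonempty with hempty | ⟨τ₁, hτ₁⟩
  · simp [hempty]
  -- the positions of `e` outside `s` get values `≥ k` that do not depend on `τ`
  have hkey : ∀ τ : Perm (Fin k), StrictMono (orderFirst e₀ r τ ∘ e) ↔ StrictMono (τ ∘ a) := by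
    intro τ
    rw [strictMono_iff_strictMonoOn_of_eqOn_compl (mem_filter.1 hτ₁).2
      (f := orderFirst e₀ r τ ∘ e) (s := s) (c := k)
      (fun i hi => by simp only [comp_apply, orderFirst_apply_of_notMem hi])
      (fun i hi => (orderFirst_lt_iff he₀ τ _).2 hi)
      (fun i hi => (orderFirst_lt_iff he₀ τ₁ _).2 hi)
      (fun i hi => not_lt.1 fun h => hi ((orderFirst_lt_iff he₀ τ _).1 h)),
      ← strictMono_domRestrict]
    have : s.domRestrict (orderFirst e₀ r τ ∘ e) = fun p => (τ (a p) : ℕ) :=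
      funext fun p => by simp [← ha, orderFirst_apply_self he₀]
    rw [this]
    rfl
  rw [filter_congr fun τ _ => hkey τ]
  have hcount := card_filter_strictMono_comp_mul_factorial rfl ha_inj (Y := Fin k)
  rw [Fintype.card_fin] at hcount
  refine Nat.dvd_of_mul_factorial_eq_factorial ?_ hcard
  -- the `Fintype` instances of `Perm (Fin k)` and `Fin k ≃ Fin k` differ syntactically
  convert hcount using 5

end OrderFirst

/-- For every integer `k ≥ 3`, every oriented `k`-graph with
Property O has at least `k! + 1` edges; that is, `f(k) ≥ k! + 1`. -/
theorem stmt_15 (k : ℕ) (hk : 3 ≤ k) (V : Type*) [Fintype V]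
    (E : Finset (Fin k → V))
    (hinj : ∀ e ∈ E, Function.Injective e)
    (hdist : ∀ e ∈ E, ∀ f ∈ E, Set.range e = Set.range f → e = f)
    (hO : ∀ σ : V → ℕ, Function.Injective σ →
      ∃ e ∈ E, ∀ i j : Fin k, i < j → σ (e i) < σ (e j)) :
    Nat.factorial k + 1 ≤ E.card := by
  by_contra! hE
  let r : V → ℕ := fun v => Fintype.equivFin V v
  have hr : Injective r := Fin.val_injective.comp (Fintype.equivFin V).injective
  obtain ⟨e₀, he₀E, -⟩ := hO r hr
  have he₀ := hinj e₀ he₀E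
  have hsum : ∑ e ∈ E, #{τ : Perm (Fin k) | StrictMono (orderFirst e₀ r τ ∘ e)} = k ! :=
    calc _ = ∑ τ : Perm (Fin k), #{e ∈ E | StrictMono (orderFirst e₀ r τ ∘ e)} :=
          sum_card_bipartiteAbove_eq_sum_card_bipartiteBelow
            (fun (e : Fin k → V) (τ : Perm (Fin k)) => StrictMono (orderFirst e₀ r τ ∘ e))
      _ = k ! := by
          simp [card_filter_strictMono_comp_eq_one hinj (Nat.lt_succ_iff.1 hE) hO
            (injective_orderFirst he₀ hr _), Fintype.card_perm]
  have hdvd : k ∣ ∑ e ∈ E.erase e₀, #{τ : Perm (Fin k) | StrictMono (orderFirst e₀ r τ ∘ e)} :=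
    dvd_sum fun e he => dvd_card_filter_strictMono_orderFirst_comp he₀
      (hinj e (mem_of_mem_erase he)) fun hsub => ne_of_mem_erase he
        (hdist e₀ he₀E e (mem_of_mem_erase he)
          (he₀.range_eq_of_range_subset (hinj e (mem_of_mem_erase he)) hsub)).symm
  rw [← add_sum_erase E _ he₀E,
    filter_congr fun τ _ => strictMono_orderFirst_comp_self_iff he₀ τ, filter_eq',
    if_pos (mem_univ _), card_singleton] at hsum
  have hk1 : k ∣ 1 := (Nat.dvd_add_left hdvd).1 (hsum ▸ Nat.dvd_factorial (by omega) le_rfl)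
  exact absurd (Nat.le_of_dvd one_pos hk1) (by omega)
end
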